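/- arXiv:quant-ph/0211095 — 7 statements merged into one kernel-verified Lean document; each statement's English description precedes it below -/
import Mathlib

section
/- If (Σ, L, ξ) is a state property system (Σ a set, L a complete lattice, ξ : Σ → P(L) satisfying SPS1–SPS3), then the collection κ(L) = {κ(a) | a ∈ L}, where κ(a) = {p ∈ Σ | a ∈ ξ(p)}, is a closure system on Σ: it contains ∅ and is closed under arbitrary intersections. -/
/-- The Cartan map of a state property system. -/
def Cartan {Ω L : Type*} (ξ : Ω → Set L) (a : L) : Set Ω := {p | a ∈ ξ p}

/-- For a state property system `(Ω, L, ξ)`, the collection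
`κ(L)` of Cartan images is a closure system on `Ω`: it contains `∅`,
contains `Ω`, and is closed under arbitrary intersections. -/
theorem cartan_image_is_closure_system
    {Ω L : Type*} [CompleteLattice L] (ξ : Ω → Set L)
    (hSPS1 : ∀ p, (⊥ : L) ∉ ξ p)
    (hSPS2 : ∀ p (s : Set L), (∀ a ∈ s, a ∈ ξ p) → sInf s ∈ ξ p)
    (hSPS3 : ∀ a b : L, a ≤ b ↔ ∀ p, a ∈ ξ p → b ∈ ξ p) :
    (∅ : Set Ω) ∈ Set.range (Cartan ξ) ∧
    (Set.univ : Set Ω) ∈ Set.range (Cartan ξ) ∧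
    ∀ S : Set (Set Ω), S ⊆ Set.range (Cartan ξ) → ⋂₀ S ∈ Set.range (Cartan ξ) := by
  refine ⟨⟨⊥, ?_⟩, ⟨⊤, ?_⟩, ?_⟩
  · ext p; simp [Cartan, hSPS1 p]
  · ext p
    simp only [Cartan, Set.mem_setOf_eq, Set.mem_univ, iff_true]
    have := hSPS2 p ∅ (by simp)
    simpa using this
  · intro S hS
    refine ⟨sInf {a | Cartan ξ a ∈ S}, ?_⟩
    ext p
    simp only [Cartan, Set.mem_setOf_eq, Set.mem_sInter]
    constructor
    · intro hp t ht
      obtain ⟨a, rfl⟩ := hS ht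
      have hle : sInf {a | Cartan ξ a ∈ S} ≤ a := sInf_le ht
      exact (hSPS3 _ _).mp hle p hp
    · intro hp
      exact hSPS2 p _ (fun a ha => hp _ ha)
end

section
/- If (Σ, C) is a closure space (∅ ∈ C and C closed under arbitrary intersections, Σ ∈ C), then (Σ, C, ξ̄) is a state property system, where C is ordered by inclusion (a complete lattice) and ξ̄(p) = {A ∈ C | p ∈ A}. -/
/-- If `(Ω, C)` is a closure space then `(Ω, C, ξ̄)` is a state
property system, where `ξ̄(p) = {A ∈ C | p ∈ A}`, `C` being ordered by
inclusion with meets given by intersections (the empty meet being `Ω`):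
(SPS1) the bottom element `∅` of `C` is in no `ξ̄(p)`;
(SPS2) `ξ̄(p)` is closed under arbitrary meets (intersections);
(SPS3) for `A, B ∈ C`, `A ⊆ B` iff for every `p`, `A ∈ ξ̄(p)` implies `B ∈ ξ̄(p)`. -/
theorem closure_space_gives_state_property_system
    {Ω : Type*} (C : Set (Set Ω))
    (hempty : (∅ : Set Ω) ∈ C)
    (huniv : (Set.univ : Set Ω) ∈ C)
    (hinter : ∀ S : Set (Set Ω), S ⊆ C → ⋂₀ S ∈ C) :
    (∀ p : Ω, (∅ : Set Ω) ∉ {A ∈ C | p ∈ A}) ∧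
    (∀ p : Ω, ∀ S : Set (Set Ω), S ⊆ {A ∈ C | p ∈ A} → ⋂₀ S ∈ {A ∈ C | p ∈ A}) ∧
    (∀ A ∈ C, ∀ B ∈ C, A ⊆ B ↔ ∀ p : Ω, A ∈ {A' ∈ C | p ∈ A'} → B ∈ {A' ∈ C | p ∈ A'}) := by
  refine ⟨fun p hp => hp.2, fun p S hS => ?_, fun A hA B hB => ?_⟩
  · exact ⟨hinter S (fun A hA => (hS hA).1), fun A hA => (hS hA).2⟩
  · constructor
    · intro h p hp
      exact ⟨hB, h hp.2⟩
    · intro h p hp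
      exact (h p ⟨hA, hp⟩).2
end

section
/- A property a ∈ L is an orthoproperty if and only if κ(a) = κ(a)^{⊥⊥} and there exists b ∈ L with κ(b) = κ(a)^⊥; in that case b = a'. -/
def perpSet {Ω : Type*} (perp : Ω → Ω → Prop) (A : Set Ω) : Set Ω :=
  {p | ∀ q ∈ A, perp p q}

def OrthoCouple {Ω L : Type*} (ξ : Ω → Set L) (perp : Ω → Ω → Prop) (a b : L) : Prop :=
  (∀ p, b ∈ ξ p ↔ ∀ q, a ∈ ξ q → perp p q) ∧
  (∀ q, a ∈ ξ q ↔ ∀ p, b ∈ ξ p → perp q p)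

/-- `a` is an orthoproperty iff `κ(a) = κ(a)^{⊥⊥}` and some
`b ∈ L` has `κ(b) = κ(a)^⊥`; in that case `b` is the orthopartner of `a`. -/
theorem orthoproperty_iff_cartan
    {Ω L : Type*} [CompleteLattice L] (ξ : Ω → Set L)
    (hSPS1 : ∀ p, (⊥ : L) ∉ ξ p)
    (hSPS2 : ∀ p (s : Set L), (∀ a ∈ s, a ∈ ξ p) → sInf s ∈ ξ p)
    (hSPS3 : ∀ a b : L, a ≤ b ↔ ∀ p, a ∈ ξ p → b ∈ ξ p)
    (perp : Ω → Ω → Prop)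
    (hpsymm : ∀ p q, perp p q → perp q p)
    (hpirr : ∀ p, ¬ perp p p)
    (a : L) :
    ((∃ b, OrthoCouple ξ perp a b) ↔
      (Cartan ξ a = perpSet perp (perpSet perp (Cartan ξ a)) ∧
        ∃ b, Cartan ξ b = perpSet perp (Cartan ξ a))) ∧
    (∀ b : L, Cartan ξ a = perpSet perp (perpSet perp (Cartan ξ a)) →
      Cartan ξ b = perpSet perp (Cartan ξ a) → OrthoCouple ξ perp a b) := by
  constructor
  · constructor
    · rintro ⟨b, h1, h2⟩
      have hb : Cartan ξ b = perpSet perp (Cartan ξ a) := by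
        ext p; exact h1 p
      have ha : Cartan ξ a = perpSet perp (Cartan ξ b) := by
        ext q; exact h2 q
      exact ⟨ha.trans (by rw [hb]), b, hb⟩
    · rintro ⟨hdbl, b, hb⟩
      refine ⟨b, fun p => ?_, fun q => ?_⟩
      · exact Set.ext_iff.mp hb p
      · have := Set.ext_iff.mp hdbl q
        simp only [perpSet, Set.mem_setOf_eq] at this
        constructor
        · intro haq p hbp
          exact this.mp haq p (Set.ext_iff.mp hb p |>.mp hbp)
        · intro h
          exact this.mpr fun p hp => h p (Set.ext_iff.mp hb p |>.mpr hp)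
  · intro b hdbl hb
    refine ⟨fun p => Set.ext_iff.mp hb p, fun q => ?_⟩
    have := Set.ext_iff.mp hdbl q
    simp only [perpSet, Set.mem_setOf_eq] at this
    constructor
    · intro haq p hbp
      exact this.mp haq p (Set.ext_iff.mp hb p |>.mp hbp)
    · intro h
      exact this.mpr fun p hp => h p (Set.ext_iff.mp hb p |>.mpr hp)
end

section
/- Let (Σ, L, ξ, ⊥̂) be an ortho state property system satisfying AO1 and AO2. Then the map ' : L → L defined by a' = ⋀{a_p | p ∈ Σ, a ∈ ξ(p)} (where a_p is given by AO2) is an orthocomplementation: (a')' = a, a ≤ b ⇒ b' ≤ a', a ∧ a' = 0̄, and a ∨ a' = 1̄. -/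
def inducedPerp {Ω L : Type*} (ξ : Ω → Set L) (R : L → L → Prop) (p q : Ω) : Prop :=
  ∃ a b, R a b ∧ a ∈ ξ p ∧ b ∈ ξ q

/-- Theorem (A): An ortho state property system satisfying AO1
and AO2 induces an orthocomplementation `a' = ⋀{a_p | a ∈ ξ p}` on `L`. -/
theorem AO1_AO2_give_orthocomplementation
    {Ω L : Type*} [CompleteLattice L] (ξ : Ω → Set L)
    (hSPS1 : ∀ p, (⊥ : L) ∉ ξ p)
    (hSPS2 : ∀ p (s : Set L), (∀ a ∈ s, a ∈ ξ p) → sInf s ∈ ξ p)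
    (hSPS3 : ∀ a b : L, a ≤ b ↔ ∀ p, a ∈ ξ p → b ∈ ξ p)
    (R : L → L → Prop)
    (hsymm : ∀ a b, R a b → R b a)
    (hmeet : ∀ a b, R a b → a ⊓ b = ⊥)
    (hbot : ∀ a : L, R ⊥ a)
    (hinf : ∀ A B : Set L, (∀ a ∈ A, ∀ b ∈ B, R a b) → R (sInf A) (sInf B))
    -- AO1: a generating set of orthoproperties
    (hAO1 : ∃ T : Set L, (∀ t ∈ T, ∃ t', OrthoCouple ξ (inducedPerp ξ R) t t') ∧
      ∀ a : L, ∃ s ⊆ T, a = sInf s)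
    -- AO2: for each state `p` an element `a_p` with `a_p ∈ ξ q ↔ q ⊥ p`
    (ap : Ω → L)
    (hAO2 : ∀ p q, ap p ∈ ξ q ↔ inducedPerp ξ R q p) :
    (∀ a : L, sInf (ap '' {p | sInf (ap '' {q | a ∈ ξ q}) ∈ ξ p}) = a) ∧
    (∀ a b : L, a ≤ b → sInf (ap '' {p | b ∈ ξ p}) ≤ sInf (ap '' {p | a ∈ ξ p})) ∧
    (∀ a : L, a ⊓ sInf (ap '' {p | a ∈ ξ p}) = ⊥) ∧
    (∀ a : L, a ⊔ sInf (ap '' {p | a ∈ ξ p}) = ⊤) := by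

  obtain ⟨T, hT, hgen⟩ := hAO1
  have hmem : ∀ {a b : L} {p : Ω}, a ≤ b → a ∈ ξ p → b ∈ ξ p := fun hab ha =>
    (hSPS3 _ _).mp hab _ ha
  have htop : ∀ p : Ω, (⊤ : L) ∈ ξ p := by
    intro p
    have := hSPS2 p ∅ (by simp)
    simpa using this
  have hnever : ∀ {c : L}, (∀ p, c ∉ ξ p) → c = ⊥ := by
    intro c hc
    exact le_antisymm ((hSPS3 c ⊥).mpr fun p hp => absurd hp (hc p)) bot_le
  have hnoself : ∀ p : Ω, ¬ inducedPerp ξ R p p := by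
    rintro p ⟨a, b, hR, ha, hb⟩
    have h2 : sInf {a, b} ∈ ξ p := hSPS2 p {a, b} (by rintro x (rfl | rfl) <;> assumption)
    rw [sInf_pair, hmeet a b hR] at h2
    exact hSPS1 p h2
  have hperpsymm : ∀ p q, inducedPerp ξ R p q → inducedPerp ξ R q p := by
    rintro p q ⟨a, b, hR, ha, hb⟩
    exact ⟨b, a, hsymm a b hR, hb, ha⟩
  have hprime : ∀ (a : L) (q : Ω),
      sInf (ap '' {p | a ∈ ξ p}) ∈ ξ q ↔ ∀ p, a ∈ ξ p → inducedPerp ξ R q p := by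
    intro a q
    constructor
    · intro h p hp
      exact (hAO2 p q).mp (hmem (sInf_le (Set.mem_image_of_mem ap hp)) h)
    · intro h
      apply hSPS2
      rintro x ⟨p, hp, rfl⟩
      exact (hAO2 p q).mpr (h p hp)
  refine ⟨?_, ?_, ?_, ?_⟩
  · -- a'' = a
    intro a
    apply le_antisymm
    · -- a'' ≤ a
      obtain ⟨s, hsT, hs⟩ := hgen a
      subst hs
      apply le_sInf
      intro t ht
      obtain ⟨t', hc1, hc2⟩ := hT t (hsT ht)
      rw [hSPS3]
      intro p hp
      rw [hprime] at hp
      rw [hc2 p]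
      intro r hr
      apply hp r
      rw [hprime]
      intro m hm
      exact (hc1 r).mp hr m (hmem (sInf_le ht) hm)
    · -- a ≤ a''
      rw [hSPS3]
      intro p hp
      rw [hprime]
      intro q hq
      exact hperpsymm q p ((hprime a q).mp hq p hp)
  · -- antitone
    intro a b hab
    apply sInf_le_sInf
    rintro x ⟨p, hp, rfl⟩
    exact ⟨p, hmem hab hp, rfl⟩
  · -- a ⊓ a' = ⊥
    intro a
    refine le_antisymm ((hSPS3 _ ⊥).mpr fun p hp => ?_) bot_le
    have ha : a ∈ ξ p := hmem inf_le_left hp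
    have ha' := hmem (inf_le_right (a := a)) hp
    exact absurd ((hprime a p).mp ha' p ha) (hnoself p)
  · -- a ⊔ a' = ⊤
    intro a
    obtain ⟨s, hsT, hs⟩ := hgen (a ⊔ sInf (ap '' {p | a ∈ ξ p}))
    rw [hs, sInf_eq_top]
    intro t ht
    obtain ⟨t', hc1, hc2⟩ := hT t (hsT ht)
    have hat : a ≤ t := le_trans le_sup_left (hs ▸ sInf_le ht)
    have ha't : sInf (ap '' {p | a ∈ ξ p}) ≤ t := le_trans le_sup_right (hs ▸ sInf_le ht)
    have ht'bot : t' = ⊥ := by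
      apply hnever
      intro q hq
      have ha'q : sInf (ap '' {p | a ∈ ξ p}) ∈ ξ q := by
        rw [hprime]
        intro r hr
        exact (hc1 q).mp hq r (hmem hat hr)
      have htq : t ∈ ξ q := hmem ha't ha'q
      exact hnoself q ((hc2 q).mp htq q hq)
    have : ∀ p, t ∈ ξ p := by
      intro p
      rw [hc2 p]
      intro r hr
      rw [ht'bot] at hr
      exact absurd hr (hSPS1 r)
    exact le_antisymm le_top ((hSPS3 ⊤ t).mpr fun p _ => this p)
end

section
/- Let (Σ, L, ξ) be a state property system with orthocomplementation ', and ⊥̂ defined by a ⊥̂ b iff b ≤ a'. With the induced orthogonality p ⊥ q iff ∃a,b: a ⊥̂ b, a ∈ ξ(p), b ∈ ξ(q), every pair (a, a') is an orthocouple: a ∈ ξ(q) ⟺ ∀p (a' ∈ ξ(p) ⇒ q ⊥ p) and a' ∈ ξ(p) ⟺ ∀q (a ∈ ξ(q) ⇒ p ⊥ q). Consequently AO1 holds (every property is an orthoproperty). -/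
/-- For a state property system with orthocomplementation `'`
and `a ⊥̂ b ↔ b ≤ a'`, every pair `(a, a')` is an orthocouple with respect to
the induced orthogonality on states; consequently AO1 holds (every property
is an orthoproperty, and `L` is generated by orthoproperties under meets). -/
theorem orthocomplementation_gives_orthocouples_AO1
    {Ω L : Type*} [CompleteLattice L] (ξ : Ω → Set L)
    (hSPS1 : ∀ p, (⊥ : L) ∉ ξ p)
    (hSPS2 : ∀ p (s : Set L), (∀ a ∈ s, a ∈ ξ p) → sInf s ∈ ξ p)
    (hSPS3 : ∀ a b : L, a ≤ b ↔ ∀ p, a ∈ ξ p → b ∈ ξ p)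
    (compl : L → L)
    (hinv : ∀ a, compl (compl a) = a)
    (hanti : ∀ a b, a ≤ b → compl b ≤ compl a)
    (hmeetbot : ∀ a, a ⊓ compl a = ⊥)
    (hjointop : ∀ a, a ⊔ compl a = ⊤)
    (R : L → L → Prop)
    (hR : ∀ a b, R a b ↔ b ≤ compl a) :
    (∀ a : L, OrthoCouple ξ (inducedPerp ξ R) a (compl a)) ∧
    (∃ T : Set L, (∀ t ∈ T, ∃ t', OrthoCouple ξ (inducedPerp ξ R) t t') ∧
      ∀ a : L, ∃ s ⊆ T, a = sInf s) := by
  have up : ∀ {p} {b c : L}, b ∈ ξ p → b ≤ c → c ∈ ξ p :=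
    fun {p b c} hb hbc => (hSPS3 b c).mp hbc p hb
  have hs : ∀ p, sInf (ξ p) ∈ ξ p := fun p => hSPS2 p _ (fun _ h => h)
  have key : ∀ (a : L) (p : Ω),
      (∀ q, a ∈ ξ q → inducedPerp ξ R p q) → compl a ∈ ξ p := by
    intro a p hyp
    have h1 : a ≤ compl (sInf (ξ p)) := by
      refine (hSPS3 _ _).mpr (fun q hq => ?_)
      obtain ⟨x, y, hxy, hx, hy⟩ := hyp q hq
      have hy' : y ≤ compl x := (hR x y).mp hxy
      have : sInf (ξ q) ≤ compl (sInf (ξ p)) :=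
        le_trans (sInf_le hy) (le_trans hy' (hanti _ _ (sInf_le hx)))
      exact up (hs q) this
    have h2 : sInf (ξ p) ≤ compl a := by
      have := hanti _ _ h1
      rwa [hinv] at this
    exact up (hs p) h2
  constructor
  · intro a
    constructor
    · intro p
      constructor
      · intro hp q hq
        exact ⟨compl a, a, (hR _ _).mpr (hinv a).ge, hp, hq⟩
      · exact key a p
    · intro q
      constructor
      · intro hq p hp
        exact ⟨a, compl a, (hR _ _).mpr le_rfl, hq, hp⟩
      · intro hyp
        have := key (compl a) q hyp
        rwa [hinv] at this
  · refine ⟨Set.univ, fun t _ => ⟨compl t, ?_⟩, fun a => ⟨{a}, by simp, by simp⟩⟩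
    constructor
    · intro p
      exact ⟨fun hp q hq => ⟨compl t, t, (hR _ _).mpr (hinv t).ge, hp, hq⟩, key t p⟩
    · intro q
      refine ⟨fun hq p hp => ⟨t, compl t, (hR _ _).mpr le_rfl, hq, hp⟩, fun hyp => ?_⟩
      have := key (compl t) q hyp
      rwa [hinv] at this
end

section
/- Let (Σ, L, ξ) be a state property system with orthocomplementation ' and ⊥̂ defined by a ⊥̂ b iff b ≤ a', with induced ⊥ on Σ. Then AO2 holds: for each p ∈ Σ, the element a_p = (⋀ξ(p))' satisfies a_p ∈ ξ(q) ⟺ q ⊥ p. -/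
/-- For a state property system with orthocomplementation `'`
and `a ⊥̂ b ↔ b ≤ a'`, AO2 holds: for each state `p` the property
`a_p = (⋀ ξ(p))'` satisfies `a_p ∈ ξ q ↔ q ⊥ p`. -/
theorem orthocomplementation_gives_AO2
    {Ω L : Type*} [CompleteLattice L] (ξ : Ω → Set L)
    (hSPS1 : ∀ p, (⊥ : L) ∉ ξ p)
    (hSPS2 : ∀ p (s : Set L), (∀ a ∈ s, a ∈ ξ p) → sInf s ∈ ξ p)
    (hSPS3 : ∀ a b : L, a ≤ b ↔ ∀ p, a ∈ ξ p → b ∈ ξ p)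
    (compl : L → L)
    (hinv : ∀ a, compl (compl a) = a)
    (hanti : ∀ a b, a ≤ b → compl b ≤ compl a)
    (hmeetbot : ∀ a, a ⊓ compl a = ⊥)
    (hjointop : ∀ a, a ⊔ compl a = ⊤)
    (R : L → L → Prop)
    (hR : ∀ a b, R a b ↔ b ≤ compl a) :
    ∀ p q : Ω, compl (sInf (ξ p)) ∈ ξ q ↔ inducedPerp ξ R q p := by
  intro p q
  constructor
  · intro h
    exact ⟨compl (sInf (ξ p)), sInf (ξ p),
      (hR _ _).2 (le_of_eq (hinv _).symm), h, hSPS2 p (ξ p) (fun a ha => ha)⟩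
  · rintro ⟨a, b, hab, haq, hbp⟩
    have h1 : b ≤ compl a := (hR _ _).1 hab
    have h2 : a ≤ compl (sInf (ξ p)) := by
      have : a ≤ compl b := by
        have := hanti _ _ h1
        rwa [hinv] at this
      exact this.trans (hanti _ _ (sInf_le hbp))
    exact (hSPS3 _ _).1 h2 q haq
end

section
/- Let (Σ, C) be a closure space whose closed sets are exactly the biorthogonally closed sets of some symmetric anti-reflexive relation ⊥ on Σ (C = {A | A = A^{⊥⊥}}). Define A ⊥̂ B for A, B ∈ C iff p ⊥ q for all p ∈ A, q ∈ B. Then the orthogonality relation induced by ⊥̂ on the state property system (Σ, C, ξ̄) (namely p ⊥* q iff ∃A,B ∈ C: A ⊥̂ B, p ∈ A, q ∈ B) coincides with the original relation ⊥. -/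
lemma perpSet_anti {Ω : Type*} (perp : Ω → Ω → Prop) {X Y : Set Ω}
    (h : X ⊆ Y) : perpSet perp Y ⊆ perpSet perp X :=
  fun _ hp q hq => hp q (h hq)

lemma subset_biperp {Ω : Type*} (perp : Ω → Ω → Prop)
    (hpsymm : ∀ p q, perp p q → perp q p) (X : Set Ω) :
    X ⊆ perpSet perp (perpSet perp X) :=
  fun x hx r hr => hpsymm _ _ (hr x hx)

lemma triple_perp {Ω : Type*} (perp : Ω → Ω → Prop)
    (hpsymm : ∀ p q, perp p q → perp q p) (X : Set Ω) :
    perpSet perp X = perpSet perp (perpSet perp (perpSet perp X)) := by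
  apply Set.Subset.antisymm
  · exact subset_biperp perp hpsymm _
  · exact perpSet_anti perp (subset_biperp perp hpsymm X)

/-- part of Theorem (D): Let `(Ω, C)` be a closure space whose
closed sets are exactly the biorthogonally closed sets of a symmetric
anti-reflexive relation `⊥` on `Ω`.  With `A ⊥̂ B ↔ ∀ p ∈ A, ∀ q ∈ B, p ⊥ q`
for `A, B ∈ C`, the orthogonality relation induced by `⊥̂` on the state
property system `(Ω, C, ξ̄)` — namely `p ⊥* q ↔ ∃ A B ∈ C, A ⊥̂ B ∧ p ∈ A ∧
q ∈ B` — coincides with `⊥`. -/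
theorem induced_perp_coincides
    {Ω : Type*} (perp : Ω → Ω → Prop)
    (hpsymm : ∀ p q, perp p q → perp q p)
    (hpirr : ∀ p, ¬ perp p p)
    (C : Set (Set Ω))
    (hC : C = {A : Set Ω | A = perpSet perp (perpSet perp A)}) :
    ∀ p q : Ω,
      (∃ A ∈ C, ∃ B ∈ C, (∀ p' ∈ A, ∀ q' ∈ B, perp p' q') ∧ p ∈ A ∧ q ∈ B) ↔
        perp p q := by
  intro p q
  constructor
  · rintro ⟨A, -, B, -, hAB, hp, hq⟩
    exact hAB p hp q hq
  · intro hpq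
    refine ⟨perpSet perp (perpSet perp {p}), ?_, perpSet perp (perpSet perp {q}), ?_,
      ?_, ?_, ?_⟩
    · rw [hC]; exact triple_perp perp hpsymm _
    · rw [hC]; exact triple_perp perp hpsymm _
    · intro p' hp' q' hq'
      have h1 : q ∈ perpSet perp {p} := fun r hr => by
        rw [Set.mem_singleton_iff] at hr; subst hr; exact hpsymm _ _ hpq
      have hp'q : perp p' q := hp' q h1
      have h2 : p' ∈ perpSet perp {q} := fun r hr => by
        rw [Set.mem_singleton_iff] at hr; subst hr; exact hp'q
      exact hpsymm _ _ (hq' p' h2)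
    · exact subset_biperp perp hpsymm {p} rfl
    · exact subset_biperp perp hpsymm {q} rfl
end
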